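/- Let E be a row-finite directed graph and let v be a vertex of a cycle c = e₁⋯e_n without exit. Then the ℤ-order ideal ⟨v⟩ of T_E is isomorphic, as a ℤ-monoid, to ℕⁿ = ⊕_{i=1}^n ℕ, where ℤ acts on ℕⁿ by cyclic right shifts: ¹(k₁,…,k_n) = (k_n, k₁, …, k_{n-1}). -/

import Mathlib

/-- A directed graph: a set of vertices `V`, a set of edges `Ed`,
and source and range maps. -/
structure DGraph (V : Type) (Ed : Type) where
  s : Ed → V
  r : Ed → V

namespace DGraph

variable {V Ed : Type} (G : DGraph V Ed)

/-- A sink is a vertex emitting no edges. -/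
def IsSink (v : V) : Prop := ∀ e : Ed, G.s e ≠ v

/-- A source is a vertex receiving no edges. -/
def IsSource (v : V) : Prop := ∀ e : Ed, G.r e ≠ v

/-- A graph is row-finite if every vertex emits finitely many edges. -/
def RowFinite : Prop := ∀ v : V, {e : Ed | G.s e = v}.Finite

theorem rowFinite_of_finite [Finite Ed] : G.RowFinite := fun _ => Set.toFinite _

/-- There is an edge from `u` to `w`. -/
def Step (u w : V) : Prop := ∃ e : Ed, G.s e = u ∧ G.r e = w

/-- `u` flows to `w`: `u = w` or there is a path from `u` to `w`. -/
def FlowsTo (u w : V) : Prop := Relation.ReflTransGen G.Step u w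

/-- Strongly connected graph. -/
def StronglyConnected : Prop := ∀ u w : V, G.FlowsTo u w

/-- A (finite) path of length `≥ 1`: a nonempty list of consecutive edges. -/
structure GPath (G : DGraph V Ed) where
  edges : List Ed
  ne : edges ≠ []
  chain : edges.Chain' (fun e f => G.r e = G.s f)

namespace GPath

variable {G}

/-- The source of a path. -/
def src (p : G.GPath) : V := G.s (p.edges.head p.ne)

/-- The range of a path. -/
def tgt (p : G.GPath) : V := G.r (p.edges.getLast p.ne)

/-- The length of a path. -/
def length (p : G.GPath) : ℕ := p.edges.length

/-- The set of vertices of a path (the sources of its edges). -/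
def vset (p : G.GPath) : Set V := {v | ∃ e ∈ p.edges, G.s e = v}

/-- A cycle: a closed path with pairwise distinct edges. -/
def IsCycle (p : G.GPath) : Prop := p.src = p.tgt ∧ p.edges.Nodup

/-- The path (cycle) has an exit: an edge `f` with `s f = s eᵢ` but `f ≠ eᵢ`. -/
def HasExit (p : G.GPath) : Prop := ∃ (f e : Ed), e ∈ p.edges ∧ G.s f = G.s e ∧ f ≠ e

/-- An extreme cycle: a cycle with an exit such that every path leaving it returns to it. -/
def IsExtremeCycle (p : G.GPath) : Prop :=
  p.IsCycle ∧ p.HasExit ∧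
    ∀ lam : G.GPath, lam.src ∈ p.vset → ∃ w ∈ p.vset, G.FlowsTo lam.tgt w

end GPath

/-- Lengths of closed paths based at `v`. -/
def closedLens (v : V) : Set ℕ :=
  {n | ∃ p : G.GPath, p.src = v ∧ p.tgt = v ∧ p.length = n}

/-- `d` is the period of `v`: the greatest common divisor of the lengths of closed
paths based at `v`. -/
def IsPeriodOf (d : ℕ) (v : V) : Prop :=
  (∀ n ∈ G.closedLens v, d ∣ n) ∧ ∀ k : ℕ, (∀ n ∈ G.closedLens v, k ∣ n) → k ∣ d

/-- A line point: no vertex that `v` flows to has a bifurcation or lies on a closed path. -/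
def LinePoint (v : V) : Prop :=
  ∀ w : V, G.FlowsTo v w →
    (∀ e f : Ed, G.s e = w → G.s f = w → e = f) ∧
      ¬ ∃ p : G.GPath, p.src = w ∧ p.tgt = w

end DGraph

section MonoidOrder

variable {M : Type} [AddCommMonoid M]

/-- The algebraic preorder on a commutative monoid: `a ≤ b` iff `a + c = b` for some `c`. -/
def MLe (a b : M) : Prop := ∃ c : M, a + c = b

/-- An order ideal of a commutative monoid. -/
structure IsOrderIdeal (I : Set M) : Prop where
  zero_mem : (0 : M) ∈ I
  add_mem : ∀ {a b : M}, a ∈ I → b ∈ I → a + b ∈ I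
  mem_of_le : ∀ {a b : M}, b ∈ I → MLe a b → a ∈ I

/-- The order ideal generated by an element `x`: all `y` with `y ≤ n • x` for some `n`. -/
def orderIdealGen (x : M) : Set M := {y | ∃ n : ℕ, MLe y (n • x)}

/-- A simple order ideal: a nonzero order ideal whose only order sub-ideals are `0` and itself. -/
def IsSimpleOrderIdeal (I : Set M) : Prop :=
  IsOrderIdeal I ∧ I ≠ {0} ∧ ∀ J : Set M, IsOrderIdeal J → J ⊆ I → J = {0} ∨ J = I

/-- The nonzero elements of `I` form a group under addition. -/
def NonzeroGroup (I : Set M) : Prop :=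
  (∀ x ∈ I, ∀ y ∈ I, x ≠ 0 → y ≠ 0 → x + y ≠ 0) ∧
    ∃ e ∈ I, e ≠ (0 : M) ∧ (∀ x ∈ I, x ≠ 0 → e + x = x) ∧
      ∀ x ∈ I, x ≠ 0 → ∃ y ∈ I, y ≠ 0 ∧ x + y = e

/-- The congruence on a commutative monoid associated to an ideal `I`:
`a ≈ b` iff `a + c = b + d` for some `c, d ∈ I`. -/
def idealCon (I : Set M) (h0 : (0 : M) ∈ I)
    (hadd : ∀ {a b : M}, a ∈ I → b ∈ I → a + b ∈ I) : AddCon M where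
  r a b := ∃ c ∈ I, ∃ d ∈ I, a + c = b + d
  iseqv := by
    refine ⟨fun a => ⟨0, h0, 0, h0, rfl⟩, ?_, ?_⟩
    · rintro a b ⟨c, hc, d, hd, h⟩
      exact ⟨d, hd, c, hc, h.symm⟩
    · rintro a b c ⟨x, hx, y, hy, h1⟩ ⟨x', hx', y', hy', h2⟩
      refine ⟨x + x', hadd hx hx', y' + y, hadd hy' hy, ?_⟩
      calc a + (x + x') = (a + x) + x' := (add_assoc _ _ _).symm
        _ = (b + y) + x' := by rw [h1]
        _ = (b + x') + y := by rw [add_right_comm]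
        _ = (c + y') + y := by rw [h2]
        _ = c + (y' + y) := add_assoc _ _ _
  add' := by
    rintro a b a' b' ⟨c, hc, d, hd, h1⟩ ⟨c', hc', d', hd', h2⟩
    refine ⟨c + c', hadd hc hc', d + d', hadd hd hd', ?_⟩
    rw [add_add_add_comm, h1, h2, add_add_add_comm]

end MonoidOrder

namespace DGraph

variable {V Ed : Type} (G : DGraph V Ed)

/-- The defining relations of the talented monoid, as a relation on the free
commutative monoid on `E⁰ × ℤ`. -/
def talRel (hrf : G.RowFinite) (a b : (V × ℤ) →₀ ℕ) : Prop :=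
  ∃ (v : V) (i : ℤ), ¬ G.IsSink v ∧ a = Finsupp.single (v, i) 1 ∧
    b = ∑ e ∈ (hrf v).toFinset, Finsupp.single (G.r e, i + 1) 1

/-- The congruence generated by the defining relations of the talented monoid. -/
noncomputable def talCon (hrf : G.RowFinite) : AddCon ((V × ℤ) →₀ ℕ) := addConGen (G.talRel hrf)

/-- The talented monoid `T_E` of a row-finite graph. -/
noncomputable def Tal (hrf : G.RowFinite) : Type := (G.talCon hrf).Quotient

noncomputable instance (hrf : G.RowFinite) : AddCommMonoid (G.Tal hrf) :=
  inferInstanceAs (AddCommMonoid (G.talCon hrf).Quotient)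

/-- The generator `v(i)` of the talented monoid. -/
noncomputable def gen (hrf : G.RowFinite) (v : V) (i : ℤ) : G.Tal hrf :=
  (G.talCon hrf).mk' (Finsupp.single (v, i) 1)

/-- The action of `n : ℤ` on the talented monoid, determined by `ⁿv(i) = v(i+n)`. -/
noncomputable def shift (hrf : G.RowFinite) (n : ℤ) : G.Tal hrf →+ G.Tal hrf :=
  AddCon.lift _
    ((AddCon.mk' _).comp
      (Finsupp.mapDomain.addMonoidHom (fun p : V × ℤ => (p.1, p.2 + n))))
    (by
      refine AddCon.addConGen_le.mpr fun a b => ?_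
      rintro ⟨v, i, hv, rfl, rfl⟩
      refine (AddCon.ker_rel _).mpr ?_
      show (G.talCon hrf).mk'
            (Finsupp.mapDomain (fun p : V × ℤ => (p.1, p.2 + n)) (Finsupp.single (v, i) 1)) =
          (G.talCon hrf).mk'
            (Finsupp.mapDomain (fun p : V × ℤ => (p.1, p.2 + n))
              (∑ e ∈ (hrf v).toFinset, Finsupp.single (G.r e, i + 1) 1))
      rw [Finsupp.mapDomain_single, Finsupp.mapDomain_finset_sum]
      simp only [Finsupp.mapDomain_single]
      refine (AddCon.eq (G.talCon hrf)).mpr ?_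
      refine AddConGen.Rel.of _ _ ⟨v, i + n, hv, rfl, ?_⟩
      exact Finset.sum_congr rfl fun e _ => by rw [add_right_comm])

end DGraph


namespace DGraph

variable {V Ed : Type} (G : DGraph V Ed)

/-- A ℤ-order ideal of the talented monoid: an order ideal closed under the ℤ-action. -/
def IsZOrderIdeal (hrf : G.RowFinite) (I : Set (G.Tal hrf)) : Prop :=
  IsOrderIdeal I ∧ ∀ (n : ℤ) (x : G.Tal hrf), x ∈ I → G.shift hrf n x ∈ I

/-- The ℤ-order ideal generated by a set `S`. -/
def zIdealGen (hrf : G.RowFinite) (S : Set (G.Tal hrf)) : Set (G.Tal hrf) :=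
  ⋂₀ {I : Set (G.Tal hrf) | G.IsZOrderIdeal hrf I ∧ S ⊆ I}

/-- A simple ℤ-order ideal: a nonzero ℤ-order ideal whose only ℤ-order sub-ideals
are `0` and itself. -/
def IsSimpleZIdeal (hrf : G.RowFinite) (I : Set (G.Tal hrf)) : Prop :=
  G.IsZOrderIdeal hrf I ∧ I ≠ {0} ∧
    ∀ J : Set (G.Tal hrf), G.IsZOrderIdeal hrf J → J ⊆ I → J = {0} ∨ J = I

/-- The adjacency matrix of a graph: the `(u, w)` entry is the number of edges
from `u` to `w`. -/
noncomputable def adj : Matrix V V ℕ := Matrix.of fun u w => Nat.card {e : Ed // G.s e = u ∧ G.r e = w}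

/-- The defining relations of the graph monoid `M_E`, as a relation on the free
commutative monoid on `E⁰`. -/
def gmRel (hrf : G.RowFinite) (a b : V →₀ ℕ) : Prop :=
  ∃ v : V, ¬ G.IsSink v ∧ a = Finsupp.single v 1 ∧
    b = ∑ e ∈ (hrf v).toFinset, Finsupp.single (G.r e) 1

/-- The graph monoid `M_E` of a row-finite graph. -/
noncomputable def GM (hrf : G.RowFinite) : Type := (addConGen (G.gmRel hrf)).Quotient

noncomputable instance (hrf : G.RowFinite) : AddCommMonoid (G.GM hrf) :=
  inferInstanceAs (AddCommMonoid (addConGen (G.gmRel hrf)).Quotient)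

/-- The smallest reflexive, transitive and additive relation on the free commutative
monoid on `E⁰` containing the defining relations of the graph monoid. -/
inductive FlowRel (hrf : G.RowFinite) : (V →₀ ℕ) → (V →₀ ℕ) → Prop
  | of {a b : V →₀ ℕ} : G.gmRel hrf a b → FlowRel hrf a b
  | refl (a : V →₀ ℕ) : FlowRel hrf a a
  | trans {a b c : V →₀ ℕ} : FlowRel hrf a b → FlowRel hrf b c → FlowRel hrf a c
  | add_right {a b : V →₀ ℕ} (c : V →₀ ℕ) : FlowRel hrf a b → FlowRel hrf (a + c) (b + c)

/-- The quotient of the talented monoid by a ℤ-order ideal. -/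
noncomputable def TalQuot (hrf : G.RowFinite) (I : Set (G.Tal hrf))
    (hI : G.IsZOrderIdeal hrf I) : Type :=
  (idealCon I hI.1.zero_mem (fun ha hb => hI.1.add_mem ha hb)).Quotient

noncomputable instance (hrf : G.RowFinite) (I : Set (G.Tal hrf))
    (hI : G.IsZOrderIdeal hrf I) : AddCommMonoid (G.TalQuot hrf I hI) :=
  inferInstanceAs
    (AddCommMonoid (idealCon I hI.1.zero_mem (fun ha hb => hI.1.add_mem ha hb)).Quotient)

/-- The ℤ-action descends to the quotient of the talented monoid by a ℤ-order ideal. -/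
noncomputable def qshift (hrf : G.RowFinite) (I : Set (G.Tal hrf))
    (hI : G.IsZOrderIdeal hrf I) (n : ℤ) : G.TalQuot hrf I hI →+ G.TalQuot hrf I hI :=
  AddCon.lift _
    ((AddCon.mk' (idealCon I hI.1.zero_mem (fun ha hb => hI.1.add_mem ha hb))).comp
      (G.shift hrf n))
    (by
      rintro a b ⟨c, hc, d, hd, h⟩
      show AddCon.ker _ _ _
      refine (AddCon.ker_rel _).mpr ?_
      show (AddCon.mk' _) (G.shift hrf n a) = (AddCon.mk' _) (G.shift hrf n b)
      refine (AddCon.eq _).mpr ?_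
      exact ⟨G.shift hrf n c, hI.2 n c hc, G.shift hrf n d, hI.2 n d hd, by
        rw [← map_add, ← map_add, h]⟩)

end DGraph

section Aux

open DGraph Finsupp

variable {V Ed : Type} {G : DGraph V Ed} {hrf : G.RowFinite}

lemma shift_mk (n : ℤ) (a : (V × ℤ) →₀ ℕ) :
    G.shift hrf n ((G.talCon hrf).mk' a) =
      (G.talCon hrf).mk' (Finsupp.mapDomain (fun p : V × ℤ => (p.1, p.2 + n)) a) := rfl

lemma shift_gen (n : ℤ) (u : V) (i : ℤ) :
    G.shift hrf n (G.gen hrf u i) = G.gen hrf u (i + n) := by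
  rw [DGraph.gen, shift_mk, Finsupp.mapDomain_single]; rfl

lemma shift_shift (m n : ℤ) (x : G.Tal hrf) :
    G.shift hrf n (G.shift hrf m x) = G.shift hrf (m + n) x := by
  obtain ⟨a, rfl⟩ := (G.talCon hrf).mk'_surjective x
  rw [shift_mk, shift_mk, shift_mk, ← Finsupp.mapDomain_comp]
  congr 1
  apply Finsupp.mapDomain_congr
  intro p _
  simp [Function.comp, add_assoc]

lemma shift_zero (x : G.Tal hrf) : G.shift hrf 0 x = x := by
  obtain ⟨a, rfl⟩ := (G.talCon hrf).mk'_surjective x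
  rw [shift_mk]
  congr 1
  rw [show (fun p : V × ℤ => (p.1, p.2 + 0)) = id by funext p; simp, Finsupp.mapDomain_id]

lemma sInv_eq {c : G.GPath} (hno : ¬ c.HasExit) {e : Ed} (he : e ∈ c.edges) :
    (hrf (G.s e)).toFinset = {e} := by
  ext f
  simp only [Set.Finite.mem_toFinset, Set.mem_setOf_eq, Finset.mem_singleton]
  constructor
  · intro hf
    by_contra hne
    exact hno ⟨f, e, he, hf, hne⟩
  · rintro rfl; rfl

lemma not_sink_self (e : Ed) : ¬ G.IsSink (G.s e) := fun h => h e rfl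

lemma gen_step {c : G.GPath} (hno : ¬ c.HasExit) {e : Ed} (he : e ∈ c.edges) (i : ℤ) :
    G.gen hrf (G.s e) i = G.gen hrf (G.r e) (i + 1) := by
  have h1 : (G.talCon hrf) (Finsupp.single (G.s e, i) 1)
      (∑ f ∈ (hrf (G.s e)).toFinset, Finsupp.single (G.r f, i + 1) 1) :=
    AddConGen.Rel.of _ _ ⟨G.s e, i, not_sink_self e, rfl, rfl⟩
  have h2 := (AddCon.eq (G.talCon hrf)).mpr h1
  rw [sInv_eq hno he, Finset.sum_singleton] at h2
  exact h2

lemma chain_walk {c : G.GPath} (hno : ¬ c.HasExit) :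
    ∀ (l : List Ed) (hne : l ≠ []),
      l.Chain' (fun e f => G.r e = G.s f) → (∀ e ∈ l, e ∈ c.edges) → ∀ i : ℤ,
      G.gen hrf (G.s (l.head hne)) i = G.gen hrf (G.r (l.getLast hne)) (i + l.length)
  | [], hne => absurd rfl hne
  | [e], _ => fun _ hmem i => by
      simpa using gen_step hno (hmem e (by simp)) i
  | e :: f :: t, _ => fun hch hmem i => by
      have h1 := gen_step (hrf := hrf) hno (hmem e (by simp)) i
      have hrs : G.r e = G.s f := (List.isChain_cons_cons.mp hch).1
      have ih := chain_walk hno (f :: t) (by simp)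
        (List.isChain_cons_cons.mp hch).2 (fun x hx => hmem x (by simp [hx])) (i + 1)
      rw [List.head_cons, List.getLast_cons (by simp : f :: t ≠ [])] at *
      rw [h1, hrs, ih]
      congr 1
      simp only [List.length_cons]
      push_cast
      ring

lemma head_congr {α : Type*} {l l' : List α} (h : l = l') (h1 : l ≠ []) (h2 : l' ≠ []) :
    l.head h1 = l'.head h2 := by subst h; rfl

lemma getLast_congr {α : Type*} {l l' : List α} (h : l = l') (h1 : l ≠ []) (h2 : l' ≠ []) :
    l.getLast h1 = l'.getLast h2 := by subst h; rfl

lemma walk_full {c : G.GPath} (hno : ¬ c.HasExit) (i : ℤ) :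
    G.gen hrf c.src i = G.gen hrf c.tgt (i + c.length) :=
  chain_walk hno c.edges c.ne c.chain (fun _ h => h) i

lemma locate {c : G.GPath} (hno : ¬ c.HasExit) {u : V} (hu : u ∈ c.vset) :
    ∃ a b : ℕ, a + b = c.length ∧
      (∀ i : ℤ, G.gen hrf c.src i = G.gen hrf u (i + a)) ∧
      (∀ i : ℤ, G.gen hrf u i = G.gen hrf c.tgt (i + b)) := by
  obtain ⟨e, he, hse⟩ := hu
  obtain ⟨l1, l2, hl⟩ := List.append_of_mem he
  have hch : (l1 ++ e :: l2).Chain' (fun e f => G.r e = G.s f) := hl ▸ c.chain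
  obtain ⟨hch1, hch2, hj⟩ := List.isChain_append.mp hch
  have hmem : ∀ x ∈ l1 ++ e :: l2, x ∈ c.edges := fun x hx => hl ▸ hx
  refine ⟨l1.length, l2.length + 1, ?_, ?_, ?_⟩
  · have := congrArg List.length hl
    simp only [List.length_append, List.length_cons] at this
    simpa [GPath.length] using this.symm
  · intro i
    rcases List.eq_nil_or_concat l1 with h1 | _
    · subst h1
      simp only [List.nil_append] at hl
      have hsrc : c.src = u := by
        rw [GPath.src]
        have : c.edges.head c.ne = e := by
          rw [head_congr hl c.ne (by simp)]
          simp
        rw [this, hse]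
      rw [hsrc]
      norm_num
    · have h1 : l1 ≠ [] := by rintro rfl; simp_all
      have hw := chain_walk (hrf := hrf) hno l1 h1 hch1
        (fun x hx => hmem x (by simp [hx])) i
      have hhead : c.edges.head c.ne = l1.head h1 := by
        rw [head_congr hl c.ne (by simp [h1]), List.head_append_left h1]
      have hjunc : G.r (l1.getLast h1) = u := by
        have := hj (l1.getLast h1) (List.getLast?_eq_getLast h1) e rfl
        rw [this, hse]
      rw [GPath.src, hhead, hw, hjunc]
  · intro i
    have hw := chain_walk (hrf := hrf) hno (e :: l2) (by simp) hch2
      (fun x hx => hmem x (by simp [hx])) i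
    have htgt : c.edges.getLast c.ne = (e :: l2).getLast (by simp) := by
      rw [getLast_congr hl c.ne (by simp), List.getLast_append_right (by simp : e :: l2 ≠ [])]
    rw [← hse, GPath.tgt, htgt]
    simpa using hw

lemma gen_vset_period {c : G.GPath} (hc : c.IsCycle) (hno : ¬ c.HasExit) {u : V}
    (hu : u ∈ c.vset) (i : ℤ) : G.gen hrf u i = G.gen hrf u (i + c.length) := by
  obtain ⟨a, b, hab, hA, hB⟩ := locate hno hu
  rw [hB i, ← hc.1, hA (i + b)]
  congr 1
  have h : (a : ℤ) + b = c.length := by exact_mod_cast congrArg (Nat.cast (R := ℤ)) hab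
  omega

lemma gen_vset_period_z {c : G.GPath} (hc : c.IsCycle) (hno : ¬ c.HasExit) {u : V}
    (hu : u ∈ c.vset) : ∀ (q i : ℤ), G.gen hrf u (i + c.length * q) = G.gen hrf u i := by
  intro q
  induction q using Int.induction_on with
  | zero => simp
  | succ k ih =>
    intro i
    have h1 : (i : ℤ) + c.length * (k + 1) = (i + c.length * k) + c.length := by ring
    rw [h1, ← gen_vset_period hc hno hu (i + c.length * k), ih i]
  | pred k ih =>
    intro i
    have h1 := gen_vset_period (hrf := hrf) hc hno hu (i + c.length * (-k - 1))
    have h2 : (i : ℤ) + c.length * (-k - 1) + c.length = i + c.length * (-k) := by ring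
    rw [h1, h2, ih i]

lemma gen_v_mod {c : G.GPath} (hc : c.IsCycle) (hno : ¬ c.HasExit) {u : V}
    (hu : u ∈ c.vset) (m : ℤ) : G.gen hrf u m = G.gen hrf u (m % c.length) := by
  conv_lhs => rw [← Int.emod_add_mul_ediv m c.length]
  exact gen_vset_period_z hc hno hu (m / c.length) (m % c.length)

lemma length_pos (c : G.GPath) : 0 < c.length :=
  List.length_pos_iff.mpr c.ne

/-- Any generator `u(i)` with `u` on the cycle equals `v(j)` for canonical `j : Fin n`. -/
lemma gen_eq_gen_fin {c : G.GPath} (hc : c.IsCycle) (hno : ¬ c.HasExit) {u v : V}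
    (hu : u ∈ c.vset) (hv : v ∈ c.vset) (i : ℤ) :
    ∃ j : Fin c.length, G.gen hrf u i = G.gen hrf v (j : ℤ) := by
  obtain ⟨au, bu, habu, hAu, hBu⟩ := locate hno hu
  obtain ⟨av, bv, habv, hAv, hBv⟩ := locate hno hv
  have hnpos : (0 : ℤ) < c.length := by exact_mod_cast length_pos c
  set m : ℤ := i + bu + av with hm
  have h1 : G.gen hrf u i = G.gen hrf v m := by
    rw [hBu i, ← hc.1, hAv (i + bu)]
  have h2 : G.gen hrf v m = G.gen hrf v (m % c.length) := gen_v_mod hc hno hv m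
  have hlt : m % c.length < c.length := Int.emod_lt_of_pos m hnpos
  have hge : 0 ≤ m % c.length := Int.emod_nonneg m (by omega)
  refine ⟨⟨(m % c.length).toNat, by omega⟩, ?_⟩
  rw [h1, h2]
  congr 1
  simp [Int.toNat_of_nonneg hge]

/-- Full expansion of a single generator. -/
noncomputable def expand (G : DGraph V Ed) (hrf : G.RowFinite) (u : V) (i : ℤ) :
    (V × ℤ) →₀ ℕ :=
  ∑ e ∈ (hrf u).toFinset, Finsupp.single (G.r e, i + 1) 1

/-- One full expansion step on the free commutative monoid. -/
def OneStep (G : DGraph V Ed) (hrf : G.RowFinite) (a b : (V × ℤ) →₀ ℕ) : Prop :=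
  ∃ (x : (V × ℤ) →₀ ℕ) (u : V) (i : ℤ), ¬ G.IsSink u ∧
    a = x + Finsupp.single (u, i) 1 ∧
    b = x + expand G hrf u i

lemma OneStep.add {a b : (V × ℤ) →₀ ℕ} (h : OneStep G hrf a b) (c : (V × ℤ) →₀ ℕ) :
    OneStep G hrf (a + c) (b + c) := by
  obtain ⟨x, u, i, hu, rfl, rfl⟩ := h
  exact ⟨x + c, u, i, hu, by rw [add_right_comm], by rw [add_right_comm]⟩

lemma eqvGen_add {a b : (V × ℤ) →₀ ℕ} (h : Relation.EqvGen (OneStep G hrf) a b)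
    (c : (V × ℤ) →₀ ℕ) : Relation.EqvGen (OneStep G hrf) (a + c) (b + c) := by
  induction h with
  | rel x y hxy => exact Relation.EqvGen.rel _ _ (hxy.add c)
  | refl x => exact Relation.EqvGen.refl _
  | symm x y _ ih => exact ih.symm _ _
  | trans x y z _ _ ih1 ih2 => exact ih1.trans _ _ _ ih2

lemma OneStep.talCon_rel {a b : (V × ℤ) →₀ ℕ} (h : OneStep G hrf a b) :
    G.talCon hrf a b := by
  obtain ⟨x, u, i, hu, rfl, rfl⟩ := h
  exact (G.talCon hrf).add ((G.talCon hrf).refl x)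
    (AddConGen.Rel.of _ _ ⟨u, i, hu, rfl, rfl⟩)

lemma talCon_iff_eqvGen {a b : (V × ℤ) →₀ ℕ} :
    G.talCon hrf a b ↔ Relation.EqvGen (OneStep G hrf) a b := by
  constructor
  · intro h
    let C : AddCon ((V × ℤ) →₀ ℕ) :=
      { r := Relation.EqvGen (OneStep G hrf)
        iseqv := Relation.EqvGen.is_equivalence _
        add' := by
          intro p q p' q' h1 h2
          refine Relation.EqvGen.trans _ _ _ (eqvGen_add h1 p') ?_
          rw [add_comm q p', add_comm q q']
          exact eqvGen_add h2 q
      }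
    have hle : G.talCon hrf ≤ C := by
      refine AddCon.addConGen_le.mpr fun p q => ?_
      rintro ⟨u, i, hu, rfl, rfl⟩
      exact Relation.EqvGen.rel _ _ ⟨0, u, i, hu, (zero_add _).symm, (zero_add _).symm⟩
    exact hle h
  · intro h
    induction h with
    | rel x y hxy => exact hxy.talCon_rel
    | refl x => exact (G.talCon hrf).refl x
    | symm x y _ ih => exact (G.talCon hrf).symm ih
    | trans x y z _ _ ih1 ih2 => exact (G.talCon hrf).trans ih1 ih2

lemma single_cancel {k k' : V × ℤ} (hkk : k ≠ k') {x x' : (V × ℤ) →₀ ℕ}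
    (h : x + Finsupp.single k 1 = x' + Finsupp.single k' 1) :
    ∃ y, x = y + Finsupp.single k' 1 ∧ x' = y + Finsupp.single k 1 := by
  have hxk' : 1 ≤ x k' := by
    have h1 := DFunLike.congr_fun h k'
    rw [Finsupp.add_apply, Finsupp.add_apply, Finsupp.single_eq_same,
      Finsupp.single_eq_of_ne' hkk] at h1
    omega
  have hle : Finsupp.single k' 1 ≤ x := Finsupp.single_le_iff.mpr hxk'
  refine ⟨x - Finsupp.single k' 1, (tsub_add_cancel_of_le hle).symm, ?_⟩
  have h2 : (x - Finsupp.single k' 1 + Finsupp.single k 1) + Finsupp.single k' 1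
      = x' + Finsupp.single k' 1 := by
    rw [add_right_comm, tsub_add_cancel_of_le hle, h]
  exact (add_right_cancel h2).symm

lemma diamond {a b c : (V × ℤ) →₀ ℕ} (hab : OneStep G hrf a b) (hac : OneStep G hrf a c) :
    b = c ∨ ∃ d, OneStep G hrf b d ∧ OneStep G hrf c d := by
  obtain ⟨x, u, i, hu, rfl, hb⟩ := hab
  obtain ⟨x', u', i', hu', he, hc⟩ := hac
  by_cases hk : ((u, i) : V × ℤ) = (u', i')
  · injection hk with h1 h2
    subst h1; subst h2
    left
    rw [hb, hc, add_right_cancel he]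
  · obtain ⟨y, hxy, hx'y⟩ := single_cancel hk he
    right
    refine ⟨y + expand G hrf u i + expand G hrf u' i', ?_, ?_⟩
    · refine ⟨y + expand G hrf u i, u', i', hu', ?_, rfl⟩
      rw [hb, hxy, add_right_comm]
    · refine ⟨y + expand G hrf u' i', u, i, hu, ?_, by rw [add_right_comm]⟩
      rw [hc, hx'y, add_right_comm]

lemma cr_hyp : ∀ a b c : (V × ℤ) →₀ ℕ, OneStep G hrf a b → OneStep G hrf a c →
    ∃ d, Relation.ReflGen (OneStep G hrf) b d ∧
      Relation.ReflTransGen (OneStep G hrf) c d := by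
  intro a b c hab hac
  rcases diamond hab hac with h | ⟨d, hbd, hcd⟩
  · subst h
    exact ⟨b, Relation.ReflGen.refl, Relation.ReflTransGen.refl⟩
  · exact ⟨d, Relation.ReflGen.single hbd, Relation.ReflTransGen.single hcd⟩

lemma talCon_joinable {a b : (V × ℤ) →₀ ℕ} (h : G.talCon hrf a b) :
    ∃ d, Relation.ReflTransGen (OneStep G hrf) a d ∧
      Relation.ReflTransGen (OneStep G hrf) b d := by
  have h' := talCon_iff_eqvGen.mp h
  clear h
  induction h' with
  | rel x y hxy => exact ⟨y, Relation.ReflTransGen.single hxy, Relation.ReflTransGen.refl⟩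
  | refl x => exact ⟨x, Relation.ReflTransGen.refl, Relation.ReflTransGen.refl⟩
  | symm x y _ ih => obtain ⟨d, h1, h2⟩ := ih; exact ⟨d, h2, h1⟩
  | trans x y z _ _ ih1 ih2 =>
    obtain ⟨d1, hx1, hy1⟩ := ih1
    obtain ⟨d2, hy2, hz2⟩ := ih2
    obtain ⟨e, h1e, h2e⟩ := Relation.church_rosser cr_hyp hy1 hy2
    exact ⟨e, hx1.trans h1e, hz2.trans h2e⟩

lemma star_talCon {a b : (V × ℤ) →₀ ℕ}
    (h : Relation.ReflTransGen (OneStep G hrf) a b) : G.talCon hrf a b := by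
  induction h with
  | refl => exact (G.talCon hrf).refl a
  | tail _ hstep ih => exact (G.talCon hrf).trans ih hstep.talCon_rel

lemma split_one {a b c : (V × ℤ) →₀ ℕ} (h : OneStep G hrf (a + b) c) :
    (∃ a', OneStep G hrf a a' ∧ c = a' + b) ∨
    (∃ b', OneStep G hrf b b' ∧ c = a + b') := by
  obtain ⟨x, u, i, hu, he, rfl⟩ := h
  have hval := DFunLike.congr_fun he (u, i)
  rw [Finsupp.add_apply, Finsupp.add_apply, Finsupp.single_eq_same] at hval
  by_cases ha : 1 ≤ a (u, i)
  · left
    have hle : Finsupp.single ((u : V), i) 1 ≤ a := Finsupp.single_le_iff.mpr ha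
    have hxa : x = (a - Finsupp.single (u, i) 1) + b := by
      have : ((a - Finsupp.single (u, i) 1) + b) + Finsupp.single (u, i) 1
          = x + Finsupp.single (u, i) 1 := by
        rw [add_right_comm, tsub_add_cancel_of_le hle, he]
      exact (add_right_cancel this).symm
    refine ⟨(a - Finsupp.single (u, i) 1) + expand G hrf u i,
      ⟨a - Finsupp.single (u, i) 1, u, i, hu, (tsub_add_cancel_of_le hle).symm, rfl⟩, ?_⟩
    rw [hxa, add_right_comm]
  · right
    have ha : 1 ≤ b (u, i) := by omega
    have hle : Finsupp.single ((u : V), i) 1 ≤ b := Finsupp.single_le_iff.mpr ha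
    have hxa : x = a + (b - Finsupp.single (u, i) 1) := by
      have : (a + (b - Finsupp.single (u, i) 1)) + Finsupp.single (u, i) 1
          = x + Finsupp.single (u, i) 1 := by
        rw [add_assoc, tsub_add_cancel_of_le hle, he]
      exact (add_right_cancel this).symm
    refine ⟨(b - Finsupp.single (u, i) 1) + expand G hrf u i,
      ⟨b - Finsupp.single (u, i) 1, u, i, hu, (tsub_add_cancel_of_le hle).symm, rfl⟩, ?_⟩
    rw [hxa, add_assoc]

lemma split_star {a b c : (V × ℤ) →₀ ℕ}
    (h : Relation.ReflTransGen (OneStep G hrf) (a + b) c) :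
    ∃ ca cb, c = ca + cb ∧ Relation.ReflTransGen (OneStep G hrf) a ca ∧
      Relation.ReflTransGen (OneStep G hrf) b cb := by
  induction h with
  | refl => exact ⟨a, b, rfl, Relation.ReflTransGen.refl, Relation.ReflTransGen.refl⟩
  | tail _ hstep ih =>
    obtain ⟨ca, cb, rfl, hca, hcb⟩ := ih
    rcases split_one hstep with ⟨a', ha', rfl⟩ | ⟨b', hb', rfl⟩
    · exact ⟨a', cb, rfl, hca.tail ha', hcb⟩
    · exact ⟨ca, b', rfl, hca, hcb.tail hb'⟩

lemma edge_unique {c : G.GPath} (hno : ¬ c.HasExit) {e f : Ed} (he : e ∈ c.edges)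
    (hsf : G.s f = G.s e) : f = e := by
  by_contra hne
  exact hno ⟨f, e, he, hsf, hne⟩

open Classical in
/-- The position of a vertex on the cycle, as an element of `ZMod n`. -/
noncomputable def posOf (c : G.GPath) (u : V) : ZMod c.length :=
  if h : ∃ e, e ∈ c.edges ∧ G.s e = u then (c.edges.idxOf h.choose : ZMod c.length)
  else 0

open Classical in
lemma posOf_eq {c : G.GPath} (hno : ¬ c.HasExit) {e : Ed} (he : e ∈ c.edges) :
    posOf c (G.s e) = (c.edges.idxOf e : ZMod c.length) := by
  have h : ∃ f, f ∈ c.edges ∧ G.s f = G.s e := ⟨e, he, rfl⟩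
  rw [posOf, dif_pos h]
  congr 2
  exact edge_unique hno he h.choose_spec.2

open Classical in
/-- The successor edge on the cycle. -/
lemma next_edge {c : G.GPath} (hc : c.IsCycle) {e : Ed} (he : e ∈ c.edges) :
    ∃ f ∈ c.edges, G.s f = G.r e ∧
      (c.edges.idxOf f : ZMod c.length) = (c.edges.idxOf e : ZMod c.length) + 1 := by
  set l := c.edges with hl
  have hlen : l.length = c.length := rfl
  have hidx : l.idxOf e < l.length := List.idxOf_lt_length_iff.mpr he
  have hget : l.get ⟨l.idxOf e, hidx⟩ = e := List.idxOf_get hidx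
  by_cases hlast : l.idxOf e + 1 < l.length
  · set f := l.get ⟨l.idxOf e + 1, hlast⟩ with hf
    have hfmem : f ∈ l := List.get_mem l ⟨_, hlast⟩
    have hrel : G.r (l.get ⟨l.idxOf e, hidx⟩) = G.s f := by
      have hch : l.Chain' (fun e f => G.r e = G.s f) := c.chain
      exact List.isChain_iff_getElem.mp hch (l.idxOf e) (by omega)
    have hidxf : l.idxOf f = l.idxOf e + 1 := by
      have hfidx : l.idxOf f < l.length := List.idxOf_lt_length_iff.mpr hfmem
      have h1 : l.get ⟨l.idxOf f, hfidx⟩ = l.get ⟨l.idxOf e + 1, hlast⟩ :=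
        List.idxOf_get hfidx
      have := (hc.2.get_inj_iff).mp h1
      exact congrArg Fin.val this
    refine ⟨f, hfmem, by rw [← hrel, hget], ?_⟩
    rw [hidxf]
    push_cast
    ring
  · -- e is the last edge; the next edge is the head
    have hlen1 : l.idxOf e = l.length - 1 := by omega
    have hne : l ≠ [] := c.ne
    have hre : G.r e = G.s (l.head hne) := by
      have h1 : l.getLast hne = e := by
        rw [← hget, List.getLast_eq_getElem, List.get_eq_getElem]
        congr 1
        simp only [Fin.val_mk]
        omega
      have h2 : c.src = c.tgt := hc.1
      rw [GPath.src, GPath.tgt] at h2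
      rw [← h1, ← h2]
    have hheadmem : l.head hne ∈ l := List.head_mem hne
    have hidxh : l.idxOf (l.head hne) = 0 := by
      have hfidx : l.idxOf (l.head hne) < l.length := List.idxOf_lt_length_iff.mpr hheadmem
      have h1 : l.get ⟨l.idxOf (l.head hne), hfidx⟩ = l.get ⟨0, by omega⟩ := by
        rw [List.idxOf_get hfidx]
        rw [← List.get_mk_zero (by omega : 0 < l.length)]
      have := (hc.2.get_inj_iff).mp h1
      exact congrArg Fin.val this
    refine ⟨l.head hne, hheadmem, hre.symm, ?_⟩
    rw [hidxh, hlen1]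
    have hnz : 1 ≤ l.length := by omega
    have : ((l.length - 1 : ℕ) : ZMod c.length) + 1 = ((l.length - 1 + 1 : ℕ) : ZMod c.length) := by
      push_cast
      ring
    rw [this, Nat.sub_add_cancel hnz, hlen, Nat.cast_zero]
    exact (ZMod.natCast_self c.length).symm

lemma r_mem_vset {c : G.GPath} (hc : c.IsCycle) {e : Ed} (he : e ∈ c.edges) :
    G.r e ∈ c.vset := by
  obtain ⟨f, hf, hsf, _⟩ := next_edge (G := G) hc he
  exact ⟨f, hf, hsf⟩

lemma posOf_r {c : G.GPath} (hc : c.IsCycle) (hno : ¬ c.HasExit) {e : Ed}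
    (he : e ∈ c.edges) : posOf c (G.r e) = posOf c (G.s e) + 1 := by
  obtain ⟨f, hf, hsf, hidx⟩ := next_edge (G := G) hc he
  rw [← hsf, posOf_eq hno hf, posOf_eq hno he, hidx]

/-- The class of a generator `(u, i)`. -/
noncomputable def cls (c : G.GPath) (p : V × ℤ) : ZMod c.length :=
  posOf c p.1 - (p.2 : ZMod c.length)

/-- Counting generators in a given class, as an additive homomorphism. -/
noncomputable def chi (c : G.GPath) (m : ZMod c.length) : ((V × ℤ) →₀ ℕ) →+ ℕ where
  toFun a := a.sum fun p cnt => if cls (G := G) c p = m then cnt else 0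
  map_zero' := Finsupp.sum_zero_index
  map_add' a b := by
    exact Finsupp.sum_add_index' (fun p => by split <;> rfl)
      (fun p c1 c2 => by split <;> simp)

lemma chi_single (c : G.GPath) (m : ZMod c.length) (p : V × ℤ) (k : ℕ) :
    chi (G := G) c m (Finsupp.single p k) = if cls (G := G) c p = m then k else 0 := by
  unfold chi
  simp only [AddMonoidHom.coe_mk, ZeroHom.coe_mk]
  rw [Finsupp.sum_single_index (by split <;> rfl)]

/-- Supported on vertices of the cycle. -/
def CycSupp (c : G.GPath) (a : (V × ℤ) →₀ ℕ) : Prop :=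
  ∀ p ∈ a.support, p.1 ∈ c.vset

lemma cycSupp_summand {a b : (V × ℤ) →₀ ℕ} {c : G.GPath} (h : CycSupp (G := G) c (a + b)) :
    CycSupp (G := G) c a := by
  intro p hp
  apply h
  rw [Finsupp.mem_support_iff] at hp ⊢
  rw [Finsupp.add_apply]
  omega

lemma step_preserve {c : G.GPath} (hc : c.IsCycle) (hno : ¬ c.HasExit)
    {a b : (V × ℤ) →₀ ℕ} (h : OneStep G hrf a b) (hcs : CycSupp (G := G) c a) :
    CycSupp (G := G) c b ∧ ∀ m, chi (G := G) c m b = chi (G := G) c m a := by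
  classical
  obtain ⟨x, u, i, hu, rfl, rfl⟩ := h
  have hxmem : CycSupp (G := G) c x := cycSupp_summand hcs
  have humem : u ∈ c.vset := by
    apply hcs (u, i)
    rw [Finsupp.mem_support_iff, Finsupp.add_apply, Finsupp.single_eq_same]
    omega
  obtain ⟨e0, he0, hse0⟩ := humem
  have hexp : expand G hrf u i = Finsupp.single (G.r e0, i + 1) 1 := by
    rw [expand, ← hse0, sInv_eq hno he0, Finset.sum_singleton]
  constructor
  · rw [hexp]
    intro p hp
    have := Finsupp.support_add hp
    rcases Finset.mem_union.mp this with h1 | h1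
    · exact hxmem p h1
    · have := Finsupp.support_single_subset h1
      rw [Finset.mem_singleton] at this
      subst this
      exact r_mem_vset hc he0
  · intro m
    rw [hexp, map_add, map_add, chi_single, chi_single]
    have hcls : cls (G := G) c (G.r e0, i + 1) = cls (G := G) c (u, i) := by
      rw [cls, cls]
      simp only
      rw [posOf_r hc hno he0, hse0]
      push_cast
      ring
    rw [hcls]

lemma star_preserve {c : G.GPath} (hc : c.IsCycle) (hno : ¬ c.HasExit)
    {a b : (V × ℤ) →₀ ℕ} (h : Relation.ReflTransGen (OneStep G hrf) a b)
    (hcs : CycSupp (G := G) c a) :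
    CycSupp (G := G) c b ∧ ∀ m, chi (G := G) c m b = chi (G := G) c m a := by
  induction h with
  | refl => exact ⟨hcs, fun m => rfl⟩
  | tail _ hstep ih =>
    obtain ⟨h1, h2⟩ := ih
    obtain ⟨h3, h4⟩ := step_preserve hc hno hstep h1
    exact ⟨h3, fun m => (h4 m).trans (h2 m)⟩

/-- The canonical representative of `φ(k)`. -/
noncomputable def canonF (v : V) (c : G.GPath) (k : Fin c.length → ℕ) : (V × ℤ) →₀ ℕ :=
  ∑ j : Fin c.length, Finsupp.single ((v, (j : ℤ))) (k j)

lemma fin_zmod_inj {n : ℕ} (hn : 0 < n) {i j : Fin n}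
    (h : ((i : ℕ) : ZMod n) = ((j : ℕ) : ZMod n)) : i = j := by
  haveI : NeZero n := ⟨hn.ne'⟩
  apply Fin.ext
  have h2 := congrArg ZMod.val h
  rwa [ZMod.val_cast_of_lt i.2, ZMod.val_cast_of_lt j.2] at h2

lemma cls_canon_inj {c : G.GPath} {v : V} {i j : Fin c.length}
    (h : cls (G := G) c ((v, (i : ℤ))) = cls (G := G) c ((v, (j : ℤ)))) : i = j := by
  rw [cls, cls] at h
  simp only at h
  have h2 : (((i : ℕ) : ℤ) : ZMod c.length) = (((j : ℕ) : ℤ) : ZMod c.length) := by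
    have := sub_right_injective h
    exact_mod_cast this
  push_cast at h2
  exact fin_zmod_inj (length_pos c) h2

lemma cycSupp_canonF {c : G.GPath} {v : V} (hv : v ∈ c.vset) (k : Fin c.length → ℕ) :
    CycSupp (G := G) c (canonF v c k) := by
  classical
  intro p hp
  have := Finsupp.support_finset_sum hp
  rw [Finset.mem_biUnion] at this
  obtain ⟨j, _, hj⟩ := this
  have := Finsupp.support_single_subset hj
  rw [Finset.mem_singleton] at this
  subst this
  exact hv

lemma chi_canonF {c : G.GPath} {v : V} (k : Fin c.length → ℕ) (j : Fin c.length) :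
    chi (G := G) c (cls (G := G) c ((v, (j : ℤ)))) (canonF v c k) = k j := by
  rw [canonF, map_sum]
  have h1 : ∀ i : Fin c.length, i ∈ Finset.univ →
      chi (G := G) c (cls (G := G) c ((v, (j : ℤ)))) (Finsupp.single ((v, (i : ℤ))) (k i))
      = if i = j then k i else 0 := by
    intro i _
    rw [chi_single]
    congr 1
    apply propext
    constructor
    · exact fun h => cls_canon_inj h
    · rintro rfl; rfl
  rw [Finset.sum_congr rfl h1, Finset.sum_ite_eq' Finset.univ j (fun i => k i)]
  simp

lemma canon_inj {c : G.GPath} (hc : c.IsCycle) (hno : ¬ c.HasExit) {v : V}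
    (hv : v ∈ c.vset) {k k' : Fin c.length → ℕ}
    (h : G.talCon hrf (canonF v c k) (canonF v c k')) : k = k' := by
  obtain ⟨d, h1, h2⟩ := talCon_joinable h
  have e1 := star_preserve hc hno h1 (cycSupp_canonF hv k)
  have e2 := star_preserve hc hno h2 (cycSupp_canonF hv k')
  funext j
  rw [← chi_canonF (G := G) k j, ← chi_canonF (G := G) k' j,
    ← e1.2 _, ← e2.2 _]

/-- The underlying function of the isomorphism. -/
noncomputable def phiFun (hrf : G.RowFinite) (v : V) (c : G.GPath)
    (k : Fin c.length → ℕ) : G.Tal hrf :=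
  ∑ j : Fin c.length, k j • G.gen hrf v (j : ℤ)

lemma phiFun_eq_mk (v : V) (c : G.GPath) (k : Fin c.length → ℕ) :
    phiFun hrf v c k = (G.talCon hrf).mk' (canonF v c k) := by
  rw [canonF, map_sum, phiFun]
  apply Finset.sum_congr rfl
  intro j _
  rw [show Finsupp.single ((v, (j : ℤ))) (k j) = k j • Finsupp.single ((v, (j : ℤ))) 1 by
    rw [Finsupp.smul_single, smul_eq_mul, mul_one], map_nsmul]
  rfl

lemma phiFun_add (v : V) (c : G.GPath) (k k' : Fin c.length → ℕ) :
    phiFun hrf v c (k + k') = phiFun hrf v c k + phiFun hrf v c k' := by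
  rw [phiFun, phiFun, phiFun, ← Finset.sum_add_distrib]
  apply Finset.sum_congr rfl
  intro j _
  rw [Pi.add_apply, add_smul]

lemma phiFun_zero (v : V) (c : G.GPath) : phiFun hrf v c 0 = 0 := by
  rw [phiFun]
  simp

lemma phiFun_single (v : V) (c : G.GPath) (j : Fin c.length) (b : ℕ) :
    phiFun hrf v c (Pi.single j b) = b • G.gen hrf v ((j : ℕ) : ℤ) := by
  rw [phiFun, Finset.sum_eq_single j]
  · rw [Pi.single_eq_same]
  · intro i _ hij
    rw [Pi.single_eq_of_ne hij, zero_smul]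
  · intro h
    exact absurd (Finset.mem_univ j) h

lemma mk_cycSupp {c : G.GPath} (hc : c.IsCycle) (hno : ¬ c.HasExit) {v : V}
    (hv : v ∈ c.vset) {a : (V × ℤ) →₀ ℕ} (hcs : CycSupp (G := G) c a) :
    ∃ k : Fin c.length → ℕ, (G.talCon hrf).mk' a = phiFun hrf v c k := by
  revert hcs
  induction a using Finsupp.induction with
  | zero => exact fun _ => ⟨0, by rw [phiFun_zero, map_zero]; rfl⟩
  | single_add p b f hp hb ih =>
    intro hcs
    have hcf : CycSupp (G := G) c f := by
      intro q hq
      apply hcs q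
      rw [Finsupp.mem_support_iff] at hq ⊢
      rw [Finsupp.add_apply]
      omega
    obtain ⟨k0, hk0⟩ := ih hcf
    have hpv : p.1 ∈ c.vset := by
      apply hcs p
      rw [Finsupp.mem_support_iff, Finsupp.add_apply, Finsupp.single_eq_same]
      rw [Finsupp.notMem_support_iff] at hp
      omega
    obtain ⟨j, hj⟩ := gen_eq_gen_fin (hrf := hrf) hc hno hpv hv p.2
    refine ⟨Pi.single j b + k0, ?_⟩
    rw [map_add, phiFun_add, hk0]
    congr 1
    rw [show Finsupp.single p b = b • Finsupp.single p 1 by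
      rw [Finsupp.smul_single, smul_eq_mul, mul_one], map_nsmul]
    have hgen : (G.talCon hrf).mk' (Finsupp.single p 1) = G.gen hrf p.1 p.2 := rfl
    rw [hgen, hj, phiFun_single]
    rfl

lemma nsmul_mem_of {M : Type} [AddCommMonoid M] {I : Set M} (h0 : (0 : M) ∈ I)
    (hadd : ∀ {a b : M}, a ∈ I → b ∈ I → a + b ∈ I) {x : M} (hx : x ∈ I) (k : ℕ) :
    k • x ∈ I := by
  induction k with
  | zero => rw [zero_nsmul]; exact h0
  | succ k ih => rw [succ_nsmul]; exact hadd ih hx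

lemma finRotate_val_base {n : ℕ} (hn : 0 < n) (j : Fin n) :
    ∃ q : ℤ, ((finRotate n j : ℕ) : ℤ) = (j : ℤ) + 1 + n * q := by
  obtain ⟨m, rfl⟩ := Nat.exists_eq_succ_of_ne_zero hn.ne'
  rw [finRotate_succ_apply]
  refine ⟨-((((j : ℕ) + 1) / (m + 1) : ℕ) : ℤ), ?_⟩
  have hval : ((j + 1 : Fin (m + 1)) : ℕ) = ((j : ℕ) + 1) % (m + 1) := by
    rw [Fin.val_add, Fin.val_one', Nat.add_mod_mod]
  rw [hval]
  have hdm := Nat.mod_add_div ((j : ℕ) + 1) (m + 1)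
  have hcast : ((((j : ℕ) + 1) % (m + 1) : ℕ) : ℤ)
      = (((j : ℕ) + 1 : ℕ) : ℤ) - ((m + 1 : ℕ) : ℤ) * ((((j : ℕ) + 1) / (m + 1) : ℕ) : ℤ) := by
    have h2 := congrArg (Nat.cast (R := ℤ)) hdm
    push_cast at h2 ⊢
    linarith
  rw [hcast]
  push_cast
  ring

lemma finRotate_zpow_val {n : ℕ} (hn : 0 < n) (z : ℤ) (j : Fin n) :
    ∃ q : ℤ, (((finRotate n ^ z) j : ℕ) : ℤ) = (j : ℤ) + z + n * q := by
  induction z using Int.induction_on generalizing j with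
  | zero => exact ⟨0, by simp⟩
  | succ k ih =>
    obtain ⟨q0, h0⟩ := finRotate_val_base hn j
    obtain ⟨q1, h1⟩ := ih (finRotate n j)
    refine ⟨q0 + q1, ?_⟩
    rw [zpow_add_one, Equiv.Perm.mul_apply, h1, h0]
    push_cast
    ring
  | pred k ih =>
    set j' := (finRotate n)⁻¹ j with hj'
    obtain ⟨q0, h0⟩ := finRotate_val_base hn j'
    have happ : finRotate n j' = j := Equiv.apply_symm_apply _ _
    rw [happ] at h0
    obtain ⟨q1, h1⟩ := ih j'
    refine ⟨q1 - q0, ?_⟩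
    have hstep : (finRotate n ^ (-(k : ℤ) - 1)) j = (finRotate n ^ (-(k : ℤ))) j' := by
      rw [zpow_sub_one, Equiv.Perm.mul_apply]
    rw [hstep, h1, show ((j' : ℕ) : ℤ) = (j : ℤ) - 1 - n * q0 by omega]
    push_cast
    ring

end Aux

/-- If `v` lies on a cycle `c` of length `n` without exit, then the
ℤ-order ideal `⟨v⟩` of `T_E` is ℤ-monoid isomorphic to `ℕⁿ` with ℤ acting by cyclic
right shifts. -/
theorem statement15 {V Ed : Type} (G : DGraph V Ed) (hrf : G.RowFinite)
    (c : G.GPath) (hc : c.IsCycle) (hnoexit : ¬ c.HasExit)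
    (v : V) (hv : v ∈ c.vset) :
    ∃ φ : (Fin c.length → ℕ) →+ G.Tal hrf,
      Function.Injective φ ∧
      Set.range φ = G.zIdealGen hrf {G.gen hrf v 0} ∧
      ∀ (z : ℤ) (k : Fin c.length → ℕ),
        φ (fun i => k (((finRotate c.length) ^ z).symm i)) = G.shift hrf z (φ k) := by
  classical
  have hnpos : 0 < c.length := length_pos c
  set Φ : (Fin c.length → ℕ) →+ G.Tal hrf :=
    { toFun := phiFun hrf v c
      map_zero' := phiFun_zero v c
      map_add' := phiFun_add v c } with hΦ
  have happly : ∀ k, Φ k = phiFun hrf v c k := fun k => rfl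
  have hequi : ∀ (z : ℤ) (k : Fin c.length → ℕ),
      Φ (fun i => k (((finRotate c.length) ^ z).symm i)) = G.shift hrf z (Φ k) := by
    intro z k
    rw [happly, happly, phiFun, phiFun, map_sum]
    refine (Fintype.sum_equiv ((finRotate c.length) ^ z)
      (fun j => (G.shift hrf z) (k j • G.gen hrf v ((j : ℕ) : ℤ)))
      (fun i => k (((finRotate c.length) ^ z).symm i) • G.gen hrf v ((i : ℕ) : ℤ)) ?_).symm
    intro j
    rw [Equiv.symm_apply_apply, map_nsmul]
    congr 1
    obtain ⟨q, hq⟩ := finRotate_zpow_val hnpos z j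
    rw [shift_gen, hq]
    exact (gen_vset_period_z hc hnoexit hv q ((j : ℤ) + z)).symm
  have hinj : Function.Injective Φ := by
    intro k k' h
    rw [happly, happly, phiFun_eq_mk, phiFun_eq_mk] at h
    exact canon_inj hc hnoexit hv ((AddCon.eq _).mp h)
  have hrange : Set.range Φ = G.zIdealGen hrf {G.gen hrf v 0} := by
    apply Set.Subset.antisymm
    · rintro x ⟨k, rfl⟩
      rw [DGraph.zIdealGen]
      intro I hI
      obtain ⟨⟨hord, hsh⟩, hgen⟩ := hI
      have hv0 : G.gen hrf v 0 ∈ I := hgen rfl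
      rw [happly, phiFun]
      refine Finset.sum_induction _ (· ∈ I) (fun a b ha hb => hord.add_mem ha hb)
        hord.zero_mem ?_
      intro j _
      apply nsmul_mem_of hord.zero_mem (fun ha hb => hord.add_mem ha hb)
      have hsm := hsh ((j : ℕ) : ℤ) _ hv0
      rwa [shift_gen, zero_add] at hsm
    · apply Set.sInter_subset_of_mem
      refine ⟨⟨⟨⟨0, map_zero Φ⟩, ?_, ?_⟩, ?_⟩, ?_⟩
      · rintro a b ⟨k1, rfl⟩ ⟨k2, rfl⟩
        exact ⟨k1 + k2, map_add Φ k1 k2⟩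
      · intro a b hb hle
        obtain ⟨k, rfl⟩ := hb
        obtain ⟨zc, hz⟩ := hle
        obtain ⟨ar, rfl⟩ := (G.talCon hrf).mk'_surjective a
        obtain ⟨zr, rfl⟩ := (G.talCon hrf).mk'_surjective zc
        rw [happly, phiFun_eq_mk] at hz
        have hz2 : (G.talCon hrf).mk' (ar + zr) = (G.talCon hrf).mk' (canonF v c k) := by
          rw [map_add]; exact hz
        have hcon := (AddCon.eq _).mp hz2
        obtain ⟨d, hd1, hd2⟩ := talCon_joinable hcon
        have hcsd := (star_preserve hc hnoexit hd2 (cycSupp_canonF hv k)).1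
        obtain ⟨da, dz, rfl, hda, hdz⟩ := split_star hd1
        have h2 : (G.talCon hrf).mk' ar = (G.talCon hrf).mk' da :=
          (AddCon.eq _).mpr (star_talCon hda)
        obtain ⟨k', hk'⟩ := mk_cycSupp hc hnoexit hv (cycSupp_summand hcsd)
        exact ⟨k', by rw [happly, ← hk', h2]⟩
      · rintro z x ⟨k, rfl⟩
        exact ⟨_, hequi z k⟩
      · rw [Set.singleton_subset_iff]
        refine ⟨Pi.single ⟨0, hnpos⟩ 1, ?_⟩
        rw [happly, phiFun_single, one_smul]
        norm_num
  exact ⟨Φ, hinj, hrange, hequi⟩
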